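/- Let W = δ(U(π,u,yu)) ∈ T_I(G) satisfy ζ(W) = δ(U(π̂,u,ŷu)) ≠ W, where the ζ-move swaps terminal subpaths of π_{u_j}, π_{u_{j'}} at the central vertex of G_{J_p}, and let b be the number of paths of π which enter G_{J_p} between π_{u_j} and π_{u_{j'}} and also leave G_{J_p} between these two paths. Then cross(π̂) = cross(π) − 1 − 2b if the triple (π_{u_j},π_{u_{j'}},p) is a crossing, and cross(π̂) = cross(π) + 1 + 2b otherwise. -/

import Mathlib

/- Common combinatorial setup: star networks, covering path families,
   crossing/noncrossing statistics, and the base ring ℤ[q^{1/2},q^{-1/2}]. -/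

open Equiv Finset
open scoped Classical

noncomputable section

/-- The ring `ℤ[q^{1/2}, q^{-1/2}]`, realized as Laurent polynomials in the
variable `q^{1/2}` (so the exponent-`k` monomial is `q^{k/2}`). -/
abbrev R2 : Type := LaurentPolynomial ℤ

/-- `q^{k/2}`. -/
def Qp (k : ℤ) : R2 := LaurentPolynomial.T k

/-- `q`. -/
def qq : R2 := LaurentPolynomial.T 2

/-- Coxeter length of a permutation, i.e. its inversion number. -/
def len {n : ℕ} (w : Perm (Fin n)) : ℕ :=
  ((univ : Finset (Fin n × Fin n)).filter fun p => p.1 < p.2 ∧ w p.2 < w p.1).card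

/-- Membership in the interval `J = [a,b] ⊆ [n]`. -/
def memJ {n : ℕ} (J : Fin n × Fin n) (i : Fin n) : Prop := J.1 ≤ i ∧ i ≤ J.2

/-- Membership in the subgroup `S_J ≤ S_n` generated by the adjacent
transpositions `s_a, …, s_{b-1}` of the interval `J = [a,b]`; equivalently,
the permutations supported on `[a,b]`. -/
def inSJ {n : ℕ} (J : Fin n × Fin n) (w : Perm (Fin n)) : Prop :=
  ∀ i, w i ≠ i → memJ J i

/-- A path family covering the star network `G_{J_1} ∘ ⋯ ∘ G_{J_m}` is
faithfully encoded by the permutation of the wire positions realized at each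
simple-star factor: at factor `p` the paths whose current positions lie in
`J_p` pass through the central vertex and are permuted arbitrarily within
`J_p` (every entering and leaving edge being used exactly once), while all
other paths use their unique horizontal edge.  Thus a covering family is a
sequence `vs` of permutations with `vs p` supported on `J_p`. -/
def IsPathFamily {n m : ℕ} (Js : Fin m → Fin n × Fin n)
    (vs : Fin m → Perm (Fin n)) : Prop :=
  ∀ p, inSJ (Js p) (vs p)

/-- The position of the path starting at source `i` just before factor `k`
(as a permutation of sources). -/
def posAt {n m : ℕ} (vs : Fin m → Perm (Fin n)) (k : ℕ) : Perm (Fin n) :=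
  (((List.ofFn vs).take k).reverse).prod

/-- The type of a covering path family: the path starting at source `i`
terminates at sink `typeOf vs i`. -/
def typeOf {n m : ℕ} (vs : Fin m → Perm (Fin n)) : Perm (Fin n) := posAt vs m

/-- The path from source `i` passes through the central vertex of the factor
`G_{J_p}`. -/
def centeredAt {n m : ℕ} (Js : Fin m → Fin n × Fin n) (vs : Fin m → Perm (Fin n))
    (p : Fin m) (i : Fin n) : Prop :=
  (Js p).1 < (Js p).2 ∧ memJ (Js p) (posAt vs p i)

/-- The paths from sources `i` and `j` both pass through the central vertex of
the factor `G_{J_p}`. -/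
def meetAt {n m : ℕ} (Js : Fin m → Fin n × Fin n) (vs : Fin m → Perm (Fin n))
    (p : Fin m) (i j : Fin n) : Prop :=
  centeredAt Js vs p i ∧ centeredAt Js vs p j

/-- The triple `(π_i, π_j, p)` is a crossing: the two paths intersect at the
central vertex of `G_{J_p}` and cross there. -/
def crossingAt {n m : ℕ} (Js : Fin m → Fin n × Fin n) (vs : Fin m → Perm (Fin n))
    (p : Fin m) (i j : Fin n) : Prop :=
  meetAt Js vs p i j ∧
    ¬ ((posAt vs p i < posAt vs p j) ↔ (posAt vs (p.1 + 1) i < posAt vs (p.1 + 1) j))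

/-- `cross(π)`: the number of crossings of the path family. -/
def crossNum {n m : ℕ} (Js : Fin m → Fin n × Fin n)
    (vs : Fin m → Perm (Fin n)) : ℕ :=
  ((univ : Finset ((Fin n × Fin n) × Fin m)).filter fun x =>
    x.1.1 < x.1.2 ∧ crossingAt Js vs x.2 x.1.1 x.1.2).card

/-- The triple `(π_i, π_j, p)` is a noncrossing with `π_i` entering and
leaving the central vertex of `G_{J_p}` below `π_j`. -/
def noncrossBelow {n m : ℕ} (Js : Fin m → Fin n × Fin n) (vs : Fin m → Perm (Fin n))
    (p : Fin m) (i j : Fin n) : Prop :=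
  meetAt Js vs p i j ∧
    posAt vs p i < posAt vs p j ∧ posAt vs (p.1 + 1) i < posAt vs (p.1 + 1) j

/-- `incross(U)` for a tableau `U` containing the paths of `π`, recorded via
the function `col` assigning to each path (index) the index of the column of
`U` containing it: the number of inverted noncrossings, i.e. noncrossings
`(π_i, π_j, p)` (with `π_i` below `π_j`) such that `π_j` lies in an earlier
column of `U` than `π_i`. -/
def incrossNum {n m : ℕ} (Js : Fin m → Fin n × Fin n) (vs : Fin m → Perm (Fin n))
    (col : Fin n → ℕ) : ℕ :=
  ((univ : Finset ((Fin n × Fin n) × Fin m)).filter fun x =>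
    noncrossBelow Js vs x.2 x.1.1 x.1.2 ∧ col x.1.2 < col x.1.1).card

/-- The number of crossings of the two paths `π_i, π_j` strictly before the
factor `G_{J_p}`. -/
def crossBefore {n m : ℕ} (Js : Fin m → Fin n × Fin n) (vs : Fin m → Perm (Fin n))
    (p : Fin m) (i j : Fin n) : ℕ :=
  ((univ : Finset (Fin m)).filter fun k => k < p ∧ crossingAt Js vs k i j).card

/-- The triple `(π_i, π_j, p)` is defective: the paths meet at the central
vertex of `G_{J_p}` having previously crossed an odd number of times. -/
def defectiveAt {n m : ℕ} (Js : Fin m → Fin n × Fin n) (vs : Fin m → Perm (Fin n))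
    (p : Fin m) (i j : Fin n) : Prop :=
  meetAt Js vs p i j ∧ Odd (crossBefore Js vs p i j)

/-- `dfct(π)`: the number of defective triples of the path family. -/
def dfctNum {n m : ℕ} (Js : Fin m → Fin n × Fin n)
    (vs : Fin m → Perm (Fin n)) : ℕ :=
  ((univ : Finset ((Fin n × Fin n) × Fin m)).filter fun x =>
    x.1.1 < x.1.2 ∧ defectiveAt Js vs x.2 x.1.1 x.1.2).card

/-- `cdncross(W)`: the number of defective noncrossings between pairs of
paths appearing in the same column of the tableau recorded by `col`. -/
def cdncrossNum {n m : ℕ} (Js : Fin m → Fin n × Fin n) (vs : Fin m → Perm (Fin n))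
    (col : Fin n → ℕ) : ℕ :=
  ((univ : Finset ((Fin n × Fin n) × Fin m)).filter fun x =>
    x.1.1 < x.1.2 ∧ defectiveAt Js vs x.2 x.1.1 x.1.2 ∧
      ¬ crossingAt Js vs x.2 x.1.1 x.1.2 ∧ col x.1.1 = col x.1.2).card

/-- The adjacent transposition `s_{i+1}` (0-indexed: swaps positions `i` and
`i+1`). -/
def swp {n : ℕ} (i : ℕ) (h : i + 1 < n) : Perm (Fin n) :=
  Equiv.swap ⟨i, by omega⟩ ⟨i + 1, h⟩

end
/- Young subgroups, minimal coset representatives, the induced sign character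
`ε_q^λ`, and column-strict tableaux (encoded by column assignments). -/

noncomputable section
open Equiv Finset
open scoped Classical

/-- Given a composition `lam = (λ_1, …, λ_r)` of `n`, the index of the block
`B_k = [λ_1 + ⋯ + λ_{k-1} + 1, λ_1 + ⋯ + λ_k]` containing the (0-indexed)
position `i`. -/
def blockIdx (lam : List ℕ) (i : ℕ) : ℕ :=
  ((List.range lam.length).filter fun k => (lam.take (k + 1)).sum ≤ i).length

/-- Membership in the Young subgroup `S_λ`: the permutations preserving each
block `B_k`. -/
def inYoung {n : ℕ} (lam : List ℕ) (w : Perm (Fin n)) : Prop :=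
  ∀ i : Fin n, blockIdx lam ((w i : Fin n) : ℕ) = blockIdx lam (i : ℕ)

/-- `u` is the minimum-length representative of its coset `S_λ u`
(in the paper's conventions, of the left coset `u S_λ` used in the
factorization `w = w_- w^*`): `u` has no inversions whose two values lie in a
common block. -/
def isMinRep {n : ℕ} (lam : List ℕ) (u : Perm (Fin n)) : Prop :=
  ∀ i j : Fin n, i < j →
    blockIdx lam ((u i : Fin n) : ℕ) = blockIdx lam ((u j : Fin n) : ℕ) →
      u i < u j

/-- The induced sign character `ε_q^λ = sgn ↑_{H_λ(q)}^{H_n(q)}`, computed in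
the natural basis: `H_n(q)` is a free right `H_λ(q)`-module with basis
`{T_u}` indexed by the minimum-length coset representatives, every basis
element factors as `T_{τ∘u} = T_u T_τ` with `τ ∈ S_λ`, the sign character
sends `T_τ` to `(-1)^{ℓ(τ)}`, and the character of the induced module
`H_n(q) ⊗_{H_λ(q)} sgn` is obtained by summing the diagonal coefficients. -/
def epsChar {n : ℕ} {H : Type*} [Ring H] [Algebra R2 H] (lam : List ℕ)
    (T : Module.Basis (Perm (Fin n)) R2 H) (h : H) : R2 :=
  ∑ u ∈ (univ : Finset (Perm (Fin n))).filter (fun u => isMinRep lam u),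
    ∑ τ ∈ (univ : Finset (Perm (Fin n))).filter (fun τ => inYoung lam τ),
      (-1 : R2) ^ len τ * T.repr (h * T u) (τ * u)

/-- A column-strict tableau of shape `λᵗ` (whose columns therefore have
lengths `λ_1, …, λ_r`) filled with the paths of a covering path family of
type `typeOf vs`, encoded by the assignment `f` sending each path to the
index of its column: column `k` must have `λ_k` entries, and since the
entries of a column are arranged bottom-to-top in increasing order of source
index, column-strictness says that the sink indices of the paths in a common
column also increase with the source indices. -/
def IsColStrictAssign {n m : ℕ} (lam : List ℕ) (vs : Fin m → Perm (Fin n))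
    (f : Fin n → Fin lam.length) : Prop :=
  (∀ k : Fin lam.length,
      ((univ : Finset (Fin n)).filter fun i => f i = k).card = lam.get k) ∧
    ∀ i j : Fin n, f i = f j → i < j → typeOf vs i < typeOf vs j

end
/- The data of the involution ζ on the tableau set T_I.  An ordered set
partition `I = (I_1, …, I_r)` of `[n]` of type `λ` is encoded by the
permutation `u = u(I)` (increasing on each block `B_k`, with `I_k = u(B_k)`);
an element `U(π, u, yu)` of `U_I(G)` is encoded by the covering path family
`π` (with `typeOf π = u ∘ y ∘ u⁻¹` for some `y ∈ S_λ`); its image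
`W = δ(U(π,u,yu)) ∈ T_I(G)` is the tableau of shape `λᵗ` whose `k`-th column
contains the paths with sources in `I_k`, so the column of the path `i` in
`W` is `colOf lam u i`. -/

noncomputable section
open Equiv Finset
open scoped Classical

/-- The column of the path `π_i` in the tableau `δ(U(π,u,yu)) ∈ T_I`. -/
def colOf {n : ℕ} (lam : List ℕ) (u : Perm (Fin n)) (i : Fin n) : ℕ :=
  blockIdx lam ((u⁻¹ i : Fin n) : ℕ)

/-- Column `c` of the tableau `δ(U(π,u,yu))` is column-strict: its sink
indices increase (bottom to top) together with its source indices. -/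
def colStrictCol {n m : ℕ} (lam : List ℕ) (u : Perm (Fin n))
    (vs : Fin m → Perm (Fin n)) (c : ℕ) : Prop :=
  ∀ i i' : Fin n, colOf lam u i = c → colOf lam u i' = c → i < i' →
    typeOf vs i < typeOf vs i'

/-- The path family obtained by swapping the terminal subpaths of the paths
from sources `i` and `i'`, beginning at the central vertex of the factor
`G_{J_p}`: the permutation realized at factor `p` is composed with the
transposition of the two leaving positions. -/
def zetaSwap {n m : ℕ} (vs : Fin m → Perm (Fin n)) (p : Fin m)
    (i i' : Fin n) : Fin m → Perm (Fin n) :=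
  fun k => if k = p then
    Equiv.swap (posAt vs (p.1 + 1) i) (posAt vs (p.1 + 1) i') * vs p
  else vs k

/-- The data entering the definition of the involution `ζ = ζ_I` at a
non-column-strict tableau `W = δ(U(π,u,yu)) ∈ T_I(G)`:
`tc` is the greatest index of a non-column-strict column of `W`; `p` is the
greatest index such that at least two paths of column `tc` pass through the
interior vertex of `G_{J_p}`; and `j, j'` are the two positions in block `tc`
whose paths `π_{u_j}, π_{u_{j'}}` (through that vertex) have the
right-to-left lexicographically greatest pair of sink indices, normalized so
that the sink of `π_{u_{j'}}` is the larger.  Then `ζ(W)` is obtained from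
`W` by replacing `π` with `zetaSwap vs p (u j) (u j')`. -/
structure ZetaData {n m : ℕ} (Js : Fin m → Fin n × Fin n) (lam : List ℕ)
    (u : Perm (Fin n)) (vs : Fin m → Perm (Fin n)) : Type where
  tc : ℕ
  p : Fin m
  j : Fin n
  j' : Fin n
  htc : ¬ colStrictCol lam u vs tc
  htcMax : ∀ c : ℕ, tc < c → colStrictCol lam u vs c
  hpMeet : ∃ i i' : Fin n, i ≠ i' ∧ colOf lam u i = tc ∧ colOf lam u i' = tc ∧
    centeredAt Js vs p i ∧ centeredAt Js vs p i'
  hpMax : ∀ p' : Fin m, p < p' →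
    ¬ ∃ i i' : Fin n, i ≠ i' ∧ colOf lam u i = tc ∧ colOf lam u i' = tc ∧
      centeredAt Js vs p' i ∧ centeredAt Js vs p' i'
  hne : j ≠ j'
  hjcol : blockIdx lam (j : ℕ) = tc
  hjcol' : blockIdx lam (j' : ℕ) = tc
  hjcent : centeredAt Js vs p (u j)
  hjcent' : centeredAt Js vs p (u j')
  hord : typeOf vs (u j) < typeOf vs (u j')
  hmax : ∀ k k' : Fin n, k ≠ k' →
    blockIdx lam (k : ℕ) = tc → blockIdx lam (k' : ℕ) = tc →
    centeredAt Js vs p (u k) → centeredAt Js vs p (u k') →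
    typeOf vs (u k) < typeOf vs (u k') →
    (typeOf vs (u k') < typeOf vs (u j') ∨
      (k' = j' ∧ typeOf vs (u k) ≤ typeOf vs (u j)))

/-- The number `b` of paths of `π` which enter the factor `G_{J_p}` between
the paths from sources `i` and `i'`, and which also leave `G_{J_p}` between
the same two paths. -/
def betweenNum {n m : ℕ} (Js : Fin m → Fin n × Fin n) (vs : Fin m → Perm (Fin n))
    (p : Fin m) (i i' : Fin n) : ℕ :=
  ((univ : Finset (Fin n)).filter fun x =>
    x ≠ i ∧ x ≠ i' ∧ centeredAt Js vs p x ∧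
      (min (posAt vs p i) (posAt vs p i') < posAt vs p x ∧
        posAt vs p x < max (posAt vs p i) (posAt vs p i')) ∧
      (min (posAt vs (p.1 + 1) i) (posAt vs (p.1 + 1) i') < posAt vs (p.1 + 1) x ∧
        posAt vs (p.1 + 1) x < max (posAt vs (p.1 + 1) i) (posAt vs (p.1 + 1) i'))).card

end

/-! At the factor `G_{J_p}` a crossing is a pair of paths through the central vertex whose order on
entering differs from their order on leaving: a discordant pair of the entering and leaving
orders. The ζ-move leaves the factors before `p` untouched and only relabels the paths after `p`
by the transposition of `π_{u_j}` and `π_{u_{j'}}`, so the crossings away from `p` are merely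
permuted. At `p` the leaving order is composed with that transposition, and counting how this
changes the discordant pairs gives `∓(1 + 2b)`. -/

noncomputable section
open Equiv Finset
open scoped Classical

lemma two_mul_card_filter_lt {α : Type*} [Fintype α] [LinearOrder α] (r : α → α → Prop)
    (hsymm : ∀ a b, r a b → r b a) (hirrefl : ∀ a, ¬ r a a) :
    2 * #(univ.filter fun x : α × α => x.1 < x.2 ∧ r x.1 x.2) =
      #(univ.filter fun x : α × α => r x.1 x.2) := by
  have hsplit : (univ.filter fun x : α × α => r x.1 x.2) =
      (univ.filter fun x : α × α => x.1 < x.2 ∧ r x.1 x.2) ∪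
        univ.filter fun x : α × α => x.2 < x.1 ∧ r x.1 x.2 := by
    ext ⟨a, b⟩
    rcases lt_trichotomy a b with h | rfl | h
    · simp [h, h.not_gt]
    · simp [hirrefl]
    · simp [h, h.not_gt]
  rw [hsplit, card_union_of_disjoint (disjoint_filter.2 fun x _ h h' => lt_asymm h.1 h'.1),
    two_mul]
  exact congrArg _ (card_equiv (Equiv.prodComm α α) fun x =>
    by simpa using and_congr_right fun _ => ⟨hsymm _ _, hsymm _ _⟩)

section Discordance

variable {α β : Type*} [LinearOrder β]

def discordantPairs (C : Finset α) (e l : α → β) : Finset (α × α) :=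
  (C ×ˢ C).filter fun x => ¬(e x.1 < e x.2 ↔ l x.1 < l x.2)

def discord (e l : α → β) (a b : α) : ℤ := if e a < e b ↔ l a < l b then 0 else 1

lemma card_discordantPairs (C : Finset α) (e l : α → β) :
    (#(discordantPairs C e l) : ℤ) = ∑ a ∈ C, ∑ b ∈ C, discord e l a b := by
  rw [discordantPairs, card_filter, Nat.cast_sum, sum_product]
  refine sum_congr rfl fun a _ => sum_congr rfl fun b _ => ?_
  by_cases h : e a < e b ↔ l a < l b <;> simp [discord, h]

lemma discord_self (e l : α → β) (a : α) : discord e l a a = 0 := by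
  simp [discord]

lemma discord_comm {e l : α → β} (he : Function.Injective e) (hl : Function.Injective l)
    (a b : α) : discord e l a b = discord e l b a := by
  rcases eq_or_ne a b with rfl | hab
  · rfl
  rcases (he.ne hab).lt_or_gt with h | h <;> rcases (hl.ne hab).lt_or_gt with h' | h' <;>
    simp [discord, h, h', h.not_gt, h'.not_gt]

variable [DecidableEq α]

lemma sum_sum_eq_of_support_pair (C : Finset α) (f : α → α → ℤ) {i i' : α}
    (hi : i ∈ C) (hi' : i' ∈ C) (hii : i ≠ i') (hsymm : ∀ a b, f a b = f b a)
    (hdiag : ∀ a, f a a = 0)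
    (hzero : ∀ a b, a ∉ ({i, i'} : Finset α) → b ∉ ({i, i'} : Finset α) → f a b = 0) :
    ∑ a ∈ C, ∑ b ∈ C, f a b = 2 * f i i' + 2 * ∑ x ∈ C \ {i, i'}, (f i x + f i' x) := by
  have hsplit : ∀ g : α → ℤ, ∑ x ∈ C, g x = g i + g i' + ∑ x ∈ C \ {i, i'}, g x := by
    intro g
    rw [← sum_sdiff (insert_subset hi (singleton_subset_iff.mpr hi')), sum_pair hii]
    ring
  have hrow : ∀ a ∈ C \ {i, i'}, ∑ b ∈ C, f a b = f i a + f i' a := by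
    intro a ha
    rw [hsplit, sum_eq_zero fun b hb => hzero a b (mem_sdiff.mp ha).2 (mem_sdiff.mp hb).2,
      hsymm a i, hsymm a i', add_zero]
  rw [hsplit, sum_congr rfl hrow, hsplit (f i), hsplit (f i'), hdiag, hdiag, hsymm i' i,
    sum_add_distrib]
  ring

lemma discord_swap_sub_discord_pair {e l : α → β} (hl : Function.Injective l) {i i' : α}
    (hii : i ≠ i') :
    discord e (l ∘ swap i i') i i' - discord e l i i' =
      if e i < e i' ↔ l i < l i' then 1 else -1 := by
  rcases (hl.ne hii).lt_or_gt with h | h <;>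
    by_cases he : e i < e i' <;> simp [discord, h, h.not_gt, he]

lemma discord_swap_sub_discord_add {e l : α → β} (he : Function.Injective e)
    (hl : Function.Injective l) {i i' x : α} (hii : i ≠ i') (hxi : x ≠ i) (hxi' : x ≠ i') :
    discord e (l ∘ swap i i') i x - discord e l i x +
        (discord e (l ∘ swap i i') i' x - discord e l i' x) =
      2 * (if e i < e i' ↔ l i < l i' then 1 else -1) *
        if (min (e i) (e i') < e x ∧ e x < max (e i) (e i')) ∧
            (min (l i) (l i') < l x ∧ l x < max (l i) (l i')) then 1 else 0 := by
  simp only [discord, Function.comp_apply, swap_apply_left, swap_apply_right,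
    swap_apply_of_ne_of_ne hxi hxi', min_lt_iff, lt_max_iff]
  have h1 := (he.ne hii).lt_or_gt
  have h2 := (he.ne hxi).symm.lt_or_gt
  have h3 := (he.ne hxi').symm.lt_or_gt
  have h4 := (hl.ne hii).lt_or_gt
  have h5 := (hl.ne hxi).symm.lt_or_gt
  have h6 := (hl.ne hxi').symm.lt_or_gt
  rcases h1 with h1 | h1 <;> rcases h2 with h2 | h2 <;> rcases h3 with h3 | h3 <;>
    rcases h4 with h4 | h4 <;> rcases h5 with h5 | h5 <;> rcases h6 with h6 | h6 <;>
    simp [h1, h2, h3, h4, h5, h6, h1.not_gt, h2.not_gt, h3.not_gt, h4.not_gt, h5.not_gt,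
      h6.not_gt] <;> order

/-- Only the pairs meeting `{i, i'}` can change: the pair `(i, i')` itself flips, and a third
element `x` changes the status of both `(i, x)` and `(i', x)` in the same direction exactly when
it lies strictly between `i` and `i'` in both orders, while otherwise these two changes cancel. -/
theorem card_discordantPairs_comp_swap (C : Finset α) {e l : α → β} (he : Function.Injective e)
    (hl : Function.Injective l) {i i' : α} (hi : i ∈ C) (hi' : i' ∈ C) (hii : i ≠ i') :
    (#(discordantPairs C e (l ∘ swap i i')) : ℤ) = #(discordantPairs C e l) +
      2 * (if e i < e i' ↔ l i < l i' then 1 else -1) *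
        (1 + 2 * #((C \ {i, i'}).filter fun x =>
          (min (e i) (e i') < e x ∧ e x < max (e i) (e i')) ∧
            (min (l i) (l i') < l x ∧ l x < max (l i) (l i')))) := by
  have hl' : Function.Injective (l ∘ swap i i') := hl.comp (swap i i').injective
  rw [← sub_eq_iff_eq_add', card_discordantPairs, card_discordantPairs, ← sum_sub_distrib]
  simp_rw [← sum_sub_distrib]
  rw [sum_sum_eq_of_support_pair C (fun a b => discord e (l ∘ swap i i') a b - discord e l a b)
    hi hi' hii (fun a b => by rw [discord_comm he hl', discord_comm he hl])
    (fun a => by simp [discord_self])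
    (fun a b ha hb => ?_), discord_swap_sub_discord_pair hl hii]
  · rw [sum_congr rfl fun x hx => discord_swap_sub_discord_add he hl hii
      (fun h => (mem_sdiff.mp hx).2 (by simp [h])) (fun h => (mem_sdiff.mp hx).2 (by simp [h])),
      ← mul_sum, sum_boole]
    ring
  · simp only [mem_insert, mem_singleton, not_or] at ha hb
    simp [discord, swap_apply_of_ne_of_ne ha.1 ha.2, swap_apply_of_ne_of_ne hb.1 hb.2]

end Discordance

section StarNetwork

variable {n m : ℕ}

lemma posAt_succ (vs : Fin m → Perm (Fin n)) {k : ℕ} (hk : k < m) :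
    posAt vs (k + 1) = vs ⟨k, hk⟩ * posAt vs k := by
  simp [posAt, List.take_add_one, hk]

lemma zetaSwap_of_ne (vs : Fin m → Perm (Fin n)) {p k : Fin m} (i i' : Fin n) (hk : k ≠ p) :
    zetaSwap vs p i i' k = vs k := if_neg hk

lemma posAt_zetaSwap_of_le (vs : Fin m → Perm (Fin n)) (p : Fin m) (i i' : Fin n) {k : ℕ}
    (hk : k ≤ p) : posAt (zetaSwap vs p i i') k = posAt vs k := by
  induction k with
  | zero => rfl
  | succ k ih =>
    have hkm : k < m := by omega
    rw [posAt_succ _ hkm, posAt_succ _ hkm, ih (by omega),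
      zetaSwap_of_ne _ _ _ (Fin.ne_of_val_ne (by simp; omega))]

lemma posAt_zetaSwap_of_lt (vs : Fin m → Perm (Fin n)) (p : Fin m) (i i' : Fin n) {k : ℕ}
    (hpk : p < k) (hkm : k ≤ m) :
    posAt (zetaSwap vs p i i') k = posAt vs k * swap i i' := by
  induction k, hpk using Nat.le_induction with
  | base =>
    rw [posAt_succ _ p.isLt, posAt_zetaSwap_of_le _ _ _ _ le_rfl, mul_swap_eq_swap_mul]
    simp [zetaSwap, posAt_succ vs p.isLt, mul_assoc]
  | succ k hpk ih =>
    rw [posAt_succ _ hkm, posAt_succ _ hkm, ih (by omega), mul_assoc,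
      zetaSwap_of_ne _ _ _ (Fin.ne_of_val_ne (by simp; omega))]

def centers (Js : Fin m → Fin n × Fin n) (vs : Fin m → Perm (Fin n)) (k : Fin m) :
    Finset (Fin n) :=
  univ.filter (centeredAt Js vs k)

def crossPairs (Js : Fin m → Fin n × Fin n) (vs : Fin m → Perm (Fin n)) (k : Fin m) :
    Finset (Fin n × Fin n) :=
  univ.filter fun x => crossingAt Js vs k x.1 x.2

lemma crossPairs_eq_discordantPairs (Js : Fin m → Fin n × Fin n) (vs : Fin m → Perm (Fin n))
    (k : Fin m) :
    crossPairs Js vs k = discordantPairs (centers Js vs k) (posAt vs k) (posAt vs (k.1 + 1)) := by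
  ext x
  simp [crossPairs, discordantPairs, centers, crossingAt, meetAt, and_assoc]

lemma crossingAt_symm (Js : Fin m → Fin n × Fin n) (vs : Fin m → Perm (Fin n)) (k : Fin m)
    (a b : Fin n) : crossingAt Js vs k a b → crossingAt Js vs k b a := by
  rintro ⟨⟨ha, hb⟩, h⟩
  refine ⟨⟨hb, ha⟩, fun h' => h ?_⟩
  rcases eq_or_ne a b with rfl | hab
  · exact h'
  rcases ((posAt vs k).injective.ne hab).lt_or_gt with h1 | h1 <;>
    rcases ((posAt vs (k.1 + 1)).injective.ne hab).lt_or_gt with h2 | h2 <;>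
    simp_all [h1.not_gt, h2.not_gt]

lemma two_mul_crossNum (Js : Fin m → Fin n × Fin n) (vs : Fin m → Perm (Fin n)) :
    2 * crossNum Js vs = ∑ k, #(crossPairs Js vs k) := by
  rw [crossNum, card_filter, Fintype.sum_prod_type, sum_comm, mul_sum]
  refine sum_congr rfl fun k _ => ?_
  rw [crossPairs, ← two_mul_card_filter_lt _ (crossingAt_symm Js vs k)
    (fun a h => h.2 (iff_of_false (lt_irrefl _) (lt_irrefl _))), card_filter,
    Fintype.sum_prod_type]

end StarNetwork

section ZetaSwap

variable {n m : ℕ} (Js : Fin m → Fin n × Fin n) (vs : Fin m → Perm (Fin n)) (p : Fin m)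

lemma crossingAt_zetaSwap_of_lt {i i' : Fin n} {k : Fin m} (hk : k < p) (a b : Fin n) :
    crossingAt Js (zetaSwap vs p i i') k a b ↔ crossingAt Js vs k a b := by
  simp only [crossingAt, meetAt, centeredAt, posAt_zetaSwap_of_le _ _ _ _ hk.le,
    posAt_zetaSwap_of_le (k := k.1 + 1) _ _ _ _ hk]

lemma crossingAt_zetaSwap_of_gt {i i' : Fin n} {k : Fin m} (hk : p < k) (a b : Fin n) :
    crossingAt Js (zetaSwap vs p i i') k a b ↔
      crossingAt Js vs k (swap i i' a) (swap i i' b) := by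
  have hk : p.1 < k.1 := hk
  simp only [crossingAt, meetAt, centeredAt, posAt_zetaSwap_of_lt _ _ _ _ hk k.isLt.le,
    posAt_zetaSwap_of_lt (k := k.1 + 1) _ _ _ _ (Nat.lt_succ_of_lt hk) k.isLt, Perm.mul_apply]

lemma card_crossPairs_zetaSwap_of_ne {i i' : Fin n} {k : Fin m} (hk : k ≠ p) :
    #(crossPairs Js (zetaSwap vs p i i') k) = #(crossPairs Js vs k) := by
  rcases hk.lt_or_gt with hk | hk
  · simp only [crossPairs, crossingAt_zetaSwap_of_lt _ _ _ hk]
  · exact card_equiv (prodCongr (swap i i') (swap i i')) fun x => by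
      simp [crossPairs, crossingAt_zetaSwap_of_gt _ _ _ hk]

lemma crossPairs_zetaSwap_self (i i' : Fin n) :
    crossPairs Js (zetaSwap vs p i i') p =
      discordantPairs (centers Js vs p) (posAt vs p) (posAt vs (p.1 + 1) ∘ swap i i') := by
  have hcenters : centers Js (zetaSwap vs p i i') p = centers Js vs p := by
    ext
    simp [centers, centeredAt, posAt_zetaSwap_of_le _ _ _ _ le_rfl]
  rw [crossPairs_eq_discordantPairs, hcenters, posAt_zetaSwap_of_le _ _ _ _ le_rfl,
    posAt_zetaSwap_of_lt _ _ _ _ (lt_add_one _) p.isLt, Perm.coe_mul]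

lemma betweenNum_eq_card (i i' : Fin n) :
    betweenNum Js vs p i i' = #((centers Js vs p \ {i, i'}).filter fun x =>
      (min (posAt vs p i) (posAt vs p i') < posAt vs p x ∧
          posAt vs p x < max (posAt vs p i) (posAt vs p i')) ∧
        (min (posAt vs (p.1 + 1) i) (posAt vs (p.1 + 1) i') < posAt vs (p.1 + 1) x ∧
          posAt vs (p.1 + 1) x < max (posAt vs (p.1 + 1) i) (posAt vs (p.1 + 1) i'))) := by
  rw [betweenNum]
  congr 1
  ext x
  simp only [centers, mem_filter, mem_sdiff, mem_univ, true_and, mem_insert, mem_singleton]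
  tauto

theorem crossNum_zetaSwap {i i' : Fin n} (hi : centeredAt Js vs p i)
    (hi' : centeredAt Js vs p i') (hii : i ≠ i') :
    (crossNum Js (zetaSwap vs p i i') : ℤ) = crossNum Js vs +
      (if crossingAt Js vs p i i' then -1 else 1) * (1 + 2 * betweenNum Js vs p i i') := by
  have hswap := card_discordantPairs_comp_swap (centers Js vs p) (e := posAt vs p)
    (l := posAt vs (p.1 + 1)) (Equiv.injective _) (Equiv.injective _) (by simpa [centers])
    (by simpa [centers]) hii
  rw [← crossPairs_zetaSwap_self, ← crossPairs_eq_discordantPairs, ← betweenNum_eq_card] at hswap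
  have hsign : (if (posAt vs p i < posAt vs p i' ↔ posAt vs (p.1 + 1) i < posAt vs (p.1 + 1) i')
      then (1 : ℤ) else -1) = if crossingAt Js vs p i i' then -1 else 1 := by
    by_cases h : posAt vs p i < posAt vs p i' ↔ posAt vs (p.1 + 1) i < posAt vs (p.1 + 1) i' <;>
      simp [crossingAt, meetAt, hi, hi', h]
  have hother : 2 * crossNum Js (zetaSwap vs p i i') + #(crossPairs Js vs p) =
      2 * crossNum Js vs + #(crossPairs Js (zetaSwap vs p i i') p) := by
    rw [two_mul_crossNum, two_mul_crossNum, ← add_sum_erase _ _ (mem_univ p),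
      ← add_sum_erase _ _ (mem_univ p), sum_congr rfl fun k hk =>
        card_crossPairs_zetaSwap_of_ne Js vs p (ne_of_mem_erase hk)]
    ring
  rw [hsign] at hswap
  linarith

end ZetaSwap

theorem zeta_move_cross_change_general
    {n m : ℕ} (Js : Fin m → Fin n × Fin n)
    (lam : List ℕ)
    (u : Perm (Fin n))
    (vs : Fin m → Perm (Fin n))
    (Z : ZetaData Js lam u vs) :
    (crossingAt Js vs Z.p (u Z.j) (u Z.j') →
      crossNum Js (zetaSwap vs Z.p (u Z.j) (u Z.j')) + 1 +
          2 * betweenNum Js vs Z.p (u Z.j) (u Z.j') =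
        crossNum Js vs) ∧
    (¬ crossingAt Js vs Z.p (u Z.j) (u Z.j') →
      crossNum Js (zetaSwap vs Z.p (u Z.j) (u Z.j')) =
        crossNum Js vs + 1 + 2 * betweenNum Js vs Z.p (u Z.j) (u Z.j')) := by
  have h := crossNum_zetaSwap Js vs Z.p Z.hjcent Z.hjcent' (u.injective.ne Z.hne)
  constructor <;> intro hc <;> simp only [hc, if_true, if_false] at h <;> omega

/-- Lemma 5.3, identity (5.6) / `l:statids`,
`eq:crossid`.  Let `W = δ(U(π,u,yu)) ∈ T_I(G)` with
`ζ(W) = δ(U(π̂,u,ŷu)) ≠ W`, where the `ζ`-move (recorded by `Z`) swaps the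
terminal subpaths of `π_{u_j}, π_{u_{j'}}` at the central vertex of
`G_{J_p}`, and let `b` be the number of paths of `π` which enter `G_{J_p}`
between `π_{u_j}` and `π_{u_{j'}}` and also leave `G_{J_p}` between these two
paths.  Then `cross(π̂) = cross(π) − 1 − 2b` if `(π_{u_j}, π_{u_{j'}}, p)` is
a crossing, and `cross(π̂) = cross(π) + 1 + 2b` otherwise. -/
theorem zeta_move_cross_change
    {n m : ℕ} (Js : Fin m → Fin n × Fin n) (hJs : ∀ p, (Js p).1 ≤ (Js p).2)
    (lam : List ℕ) (hsum : lam.sum = n) (hpos : ∀ x ∈ lam, 0 < x)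
    (hsort : lam.Pairwise (fun a b => b ≤ a))
    (u : Perm (Fin n))
    (hu : ∀ i j : Fin n, i < j →
      blockIdx lam (i : ℕ) = blockIdx lam (j : ℕ) → u i < u j)
    (vs : Fin m → Perm (Fin n)) (hvs : IsPathFamily Js vs)
    (y : Perm (Fin n)) (hy : inYoung lam y)
    (hty : typeOf vs = u * y * u⁻¹)
    (Z : ZetaData Js lam u vs) :
    (crossingAt Js vs Z.p (u Z.j) (u Z.j') →
      crossNum Js (zetaSwap vs Z.p (u Z.j) (u Z.j')) + 1 +
          2 * betweenNum Js vs Z.p (u Z.j) (u Z.j') =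
        crossNum Js vs) ∧
    (¬ crossingAt Js vs Z.p (u Z.j) (u Z.j') →
      crossNum Js (zetaSwap vs Z.p (u Z.j) (u Z.j')) =
        crossNum Js vs + 1 + 2 * betweenNum Js vs Z.p (u Z.j) (u Z.j')) :=
  zeta_move_cross_change_general Js lam u vs Z

end
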